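/- For all x, y ∈ {o,b}, (x,y)-generic bisimilarity ≈_{(x,y)} is an equivalence relation on the states of any labelled transition system. -/
import Mathlib


namespace GamesBisim

/-- Parameter values `o` (ordinary) and `b` (branching) for generic bisimulations. -/
inductive XY | o | b
deriving DecidableEq

/-- The faces ☹ (frown) and ☺ (smile). -/
inductive Face | frown | smile
deriving DecidableEq

/-- Rewards: `*` (star) and `✓` (check). -/
inductive Rw | star | check
deriving DecidableEq

/-- A labelled transition system with states `S`, actions `A` containing a
distinguished silent action `tau`, and a transition relation. -/
structure LTS (S : Type u) (A : Type v) where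
  tau : A
  Trans : S → A → S → Prop

namespace LTS

variable {S : Type u} {A : Type v}

/-- A single silent (τ) step. -/
def TauStep (L : LTS S A) (s s' : S) : Prop := L.Trans s L.tau s'

/-- `↠`: the reflexive-transitive closure of the τ-step relation. -/
def TauStar (L : LTS S A) : S → S → Prop := Relation.ReflTransGen L.TauStep

/-- `↠⁺`: the transitive closure of the τ-step relation. -/
def TauPlus (L : LTS S A) : S → S → Prop := Relation.TransGen L.TauStep

/-- An LTS is non-divergent if it admits no infinite sequence of τ-steps. -/
def NonDivergent (L : LTS S A) : Prop :=
  ¬ ∃ f : ℕ → S, ∀ i, L.TauStep (f i) (f (i + 1))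

/-- A symmetric relation `R` is a branching bisimulation. -/
def IsBranchingBisim (L : LTS S A) (R : S → S → Prop) : Prop :=
  (∀ s t, R s t → R t s) ∧
  ∀ s t a s', R s t → L.Trans s a s' →
    (a = L.tau ∧ R s' t) ∨
    ∃ t1 t', L.TauStar t t1 ∧ L.Trans t1 a t' ∧ R s t1 ∧ R s' t'

/-- Branching bisimilarity `≈b`. -/
def BranchingBisimilar (L : LTS S A) (s t : S) : Prop :=
  ∃ R, L.IsBranchingBisim R ∧ R s t

/-- A symmetric relation `R` is a delay bisimulation. -/
def IsDelayBisim (L : LTS S A) (R : S → S → Prop) : Prop :=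
  (∀ s t, R s t → R t s) ∧
  ∀ s t a s', R s t → L.Trans s a s' →
    (a = L.tau ∧ R s' t) ∨
    ∃ t1 t', L.TauStar t t1 ∧ L.Trans t1 a t' ∧ R s' t'

/-- The generalised weak transition `s ↠_{x,R,t} s'`: a weak transition `s ↠ s'`,
which in case `x = b` additionally satisfies `t R s` and `t R s'`. -/
def GenTauStar (L : LTS S A) (x : XY) (R : S → S → Prop) (t : S) (s s' : S) : Prop :=
  L.TauStar s s' ∧ (x = XY.b → R t s ∧ R t s')

/-- The strong generalised weak transition `s ⟹_{x,R,t} s'`: a weak transition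
`s ↠ s'`, which in case `x = b` is witnessed by a finite τ-path all of whose states
are related to `t` by `R`. -/
def SGenTauStar (L : LTS S A) (x : XY) (R : S → S → Prop) (t : S) (s s' : S) : Prop :=
  L.TauStar s s' ∧
  (x = XY.b → R t s ∧ Relation.ReflTransGen (fun u u' => L.TauStep u u' ∧ R t u') s s')

/-- A symmetric relation `R` is an `(x,y)`-generic bisimulation. -/
def IsGenBisim (L : LTS S A) (x y : XY) (R : S → S → Prop) : Prop :=
  (∀ s t, R s t → R t s) ∧
  ∀ s t a s', R s t → L.Trans s a s' →
    (a = L.tau ∧ R s' t) ∨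
    ∃ t1 t2 t', L.GenTauStar x R s t t1 ∧ L.Trans t1 a t2 ∧
      L.GenTauStar y R s' t2 t' ∧ R s' t'

/-- `(x,y)`-generic bisimilarity `≈_{(x,y)}`. -/
def GenBisimilar (L : LTS S A) (x y : XY) (s t : S) : Prop :=
  ∃ R, L.IsGenBisim x y R ∧ R s t

/-- A symmetric relation `R` is an `(x,y)`-generic bisimulation with explicit
divergence (divergence condition D₄). -/
def IsGenBisimED (L : LTS S A) (x y : XY) (R : S → S → Prop) : Prop :=
  L.IsGenBisim x y R ∧
  ∀ s t, R s t → ∀ f : ℕ → S, f 0 = s → (∀ i, L.TauStep (f i) (f (i + 1))) →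
    ∃ t' k, L.TauPlus t t' ∧ R (f k) t'

/-- `(x,y)`-generic bisimilarity with explicit divergence `≈ed_{(x,y)}`. -/
def GenBisimilarED (L : LTS S A) (x y : XY) (s t : S) : Prop :=
  ∃ R, L.IsGenBisimED x y R ∧ R s t

end LTS

/-- A relation `R` has the stuttering property: whenever
`t₀ →τ t₁ →τ ⋯ →τ t_k` and `t₀ R t_k`, then `t_i R t_j` for all `0 ≤ i,j ≤ k`. -/
def StutteringProperty {S : Type u} {A : Type v} (L : LTS S A) (R : S → S → Prop) : Prop :=
  ∀ (k : ℕ) (t : ℕ → S),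
    (∀ i < k, L.TauStep (t i) (t (i + 1))) → R (t 0) (t k) →
    ∀ i j, i ≤ k → j ≤ k → R (t i) (t j)

/-! ## Two-player games

A play is a maximal (finite or infinite) sequence of configurations connected by
moves, represented as `π : ℕ → Option C` which is `none` from the point (if any)
where the play has ended; a play may only end in a configuration whose owner is
stuck. A strategy for a player is a (positional) function `σ : C → C` which is
required to pick a legal move at every configuration owned by that player admitting
at least one move; a play is consistent with `σ` if every move taken from a
configuration owned by that player follows `σ`. -/

section Games

variable {C : Type u}

/-- `π` is a maximal play of the game with move relation `move`. -/
def IsPlay (move : C → C → Prop) (π : ℕ → Option C) : Prop :=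
  (∀ i c d, π i = some c → π (i + 1) = some d → move c d) ∧
  (∀ i c, π i = some c → π (i + 1) = none → ∀ d, ¬ move c d) ∧
  (∀ i, π i = none → π (i + 1) = none)

/-- The play `π` is consistent with strategy `σ` of the player owning the
configurations satisfying `owned`. -/
def ConsistentWith (owned : C → Prop) (σ : C → C) (π : ℕ → Option C) : Prop :=
  ∀ i c d, π i = some c → owned c → π (i + 1) = some d → d = σ c

/-- `σ` is a valid strategy for the player owning the configurations satisfying
`owned`: it picks a legal move wherever a move exists. -/
def ValidStrategy (owned : C → Prop) (move : C → C → Prop) (σ : C → C) : Prop :=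
  ∀ c, owned c → (∃ d, move c d) → move c (σ c)

/-- The play `π` is finite and ends in the configuration `c`. -/
def EndsAt (π : ℕ → Option C) (c : C) : Prop := ∃ i, π i = some c ∧ π (i + 1) = none

/-- The play `π` is infinite. -/
def InfinitePlay (π : ℕ → Option C) : Prop := ∀ i, π i ≠ none

/-- The Büchi winning condition on infinite plays: the play passes through
infinitely many configurations carrying a `✓` reward. -/
def BuchiWin (reward : C → Prop) (π : ℕ → Option C) : Prop :=
  ∀ n, ∃ i, n ≤ i ∧ ∃ c, π i = some c ∧ reward c

/-- Duplicator wins the play `π`: either the play is finite and Spoiler is stuck,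
or the play is infinite and satisfies the winning condition `infWin`. -/
def DupWinsPlay (dupOwned : C → Prop) (infWin : (ℕ → Option C) → Prop)
    (π : ℕ → Option C) : Prop :=
  (∃ c, EndsAt π c ∧ ¬ dupOwned c) ∨ (InfinitePlay π ∧ infWin π)

/-- Spoiler wins the play `π` (all plays not won by Duplicator). -/
def SpWinsPlay (dupOwned : C → Prop) (infWin : (ℕ → Option C) → Prop)
    (π : ℕ → Option C) : Prop :=
  (∃ c, EndsAt π c ∧ dupOwned c) ∨ (InfinitePlay π ∧ ¬ infWin π)

/-- Duplicator wins the configuration `c`: she has a strategy winning all plays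
starting in `c`. -/
def DupWins (dupOwned : C → Prop) (move : C → C → Prop)
    (infWin : (ℕ → Option C) → Prop) (c : C) : Prop :=
  ∃ σ : C → C, ValidStrategy dupOwned move σ ∧
    ∀ π, IsPlay move π → π 0 = some c → ConsistentWith dupOwned σ π →
      DupWinsPlay dupOwned infWin π

/-- Spoiler wins the configuration `c`: he has a strategy winning all plays
starting in `c`. -/
def SpWins (dupOwned : C → Prop) (move : C → C → Prop)
    (infWin : (ℕ → Option C) → Prop) (c : C) : Prop :=
  ∃ σ : C → C, ValidStrategy (fun d => ¬ dupOwned d) move σ ∧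
    ∀ π, IsPlay move π → π 0 = some c → ConsistentWith (fun d => ¬ dupOwned d) σ π →
      SpWinsPlay dupOwned infWin π

end Games

/-! ## The limited branching bisimulation (lbb) game -/

/-- Configurations of the lbb game: Spoiler-owned `⟨(s,t)⟩` and Duplicator-owned
`⟨(s,t),(a,s')⟩`. -/
inductive LConf (S : Type u) (A : Type v)
  | sp (p : S × S)
  | dup (p : S × S) (c : A × S)

/-- Ownership in the lbb game. -/
def LConf.dupOwned {S : Type u} {A : Type v} : LConf S A → Prop
  | .sp _ => False
  | .dup _ _ => True

/-- Moves of the lbb game. -/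
inductive LMove {S : Type u} {A : Type v} (L : LTS S A) : LConf S A → LConf S A → Prop
  | sp1 {s t a s'} (h : L.Trans s a s') :
      LMove L (LConf.sp (s, t)) (LConf.dup (s, t) (a, s'))
  | sp2 {s t a t'} (h : L.Trans t a t') :
      LMove L (LConf.sp (s, t)) (LConf.dup (t, s) (a, t'))
  | dup1 {u v u'} :
      LMove L (LConf.dup (u, v) (L.tau, u')) (LConf.sp (u', v))
  | dup2 {u v a u' v'} (h : L.Trans v a v') :
      LMove L (LConf.dup (u, v) (a, u')) (LConf.sp (u', v'))
  | dup3 {u v a u' v'} (h : L.TauStep v v') :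
      LMove L (LConf.dup (u, v) (a, u')) (LConf.sp (u, v'))

/-- `s ≡lb t`: Duplicator wins the lbb game from `⟨(s,t)⟩_S`; finite plays are won
by Duplicator iff Spoiler is stuck, and all infinite plays are won by Duplicator. -/
def LTS.lbbEquiv {S : Type u} {A : Type v} (L : LTS S A) (s t : S) : Prop :=
  DupWins LConf.dupOwned (LMove L) (fun _ => True) (LConf.sp (s, t))

/-! ## The branching bisimulation (bb) game -/

/-- Configurations of the bb game: `⟨(s,t),c,r⟩` owned by Spoiler or Duplicator,
with challenge `c ∈ (A × S) ∪ {†}` (where `none` is `†`) and reward `r`. -/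
inductive BConf (S : Type u) (A : Type v)
  | sp (p : S × S) (c : Option (A × S)) (r : Rw)
  | dup (p : S × S) (c : Option (A × S)) (r : Rw)

/-- Ownership in the bb game. -/
def BConf.dupOwned {S : Type u} {A : Type v} : BConf S A → Prop
  | .sp _ _ _ => False
  | .dup _ _ _ => True

/-- The configuration carries a `✓` reward. -/
def BConf.reward {S : Type u} {A : Type v} : BConf S A → Prop
  | .sp _ _ r => r = Rw.check
  | .dup _ _ r => r = Rw.check

/-- Moves of the bb game. -/
inductive BMove {S : Type u} {A : Type v} (L : LTS S A) : BConf S A → BConf S A → Prop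
  | sp1star {s t c r a s'} (h : L.Trans s a s') (hc : c = some (a, s') ∨ c = none) :
      BMove L (BConf.sp (s, t) c r) (BConf.dup (s, t) (some (a, s')) Rw.star)
  | sp1check {s t c r a s'} (h : L.Trans s a s')
      (hc : ¬(c = some (a, s') ∨ c = none)) :
      BMove L (BConf.sp (s, t) c r) (BConf.dup (s, t) (some (a, s')) Rw.check)
  | sp2 {s t c r a t'} (h : L.Trans t a t') :
      BMove L (BConf.sp (s, t) c r) (BConf.dup (t, s) (some (a, t')) Rw.check)
  | dup1 {u v u' r} :
      BMove L (BConf.dup (u, v) (some (L.tau, u')) r) (BConf.sp (u', v) none Rw.check)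
  | dup2 {u v a u' v' r} (h : L.Trans v a v') :
      BMove L (BConf.dup (u, v) (some (a, u')) r) (BConf.sp (u', v') none Rw.check)
  | dup3 {u v a u' v' r} (h : L.TauStep v v') :
      BMove L (BConf.dup (u, v) (some (a, u')) r)
        (BConf.sp (u, v') (some (a, u')) Rw.star)

/-- `s ≡b t`: Duplicator wins the bb game from `⟨(s,t),†,*⟩_S`, where infinite
plays are won by Duplicator iff they yield infinitely many `✓` rewards. -/
def LTS.bbEquiv {S : Type u} {A : Type v} (L : LTS S A) (s t : S) : Prop :=
  DupWins BConf.dupOwned (BMove L) (BuchiWin BConf.reward) (BConf.sp (s, t) none Rw.star)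

/-! ## The generic bisimulation (gb) game, and its explicit-divergence variant -/

/-- Configurations of the generic games: `⟨(s,t),c,m,r⟩` owned by Spoiler or
Duplicator, with challenge `c ∈ (A × S) ∪ {†}`, partial match
`m ∈ (S × {☹,☺}) ∪ {†}` and reward `r`. -/
inductive GConf (S : Type u) (A : Type v)
  | sp (p : S × S) (c : Option (A × S)) (m : Option (S × Face)) (r : Rw)
  | dup (p : S × S) (c : Option (A × S)) (m : Option (S × Face)) (r : Rw)

/-- Ownership in the generic games. -/
def GConf.dupOwned {S : Type u} {A : Type v} : GConf S A → Prop
  | .sp _ _ _ _ => False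
  | .dup _ _ _ _ => True

/-- The configuration carries a `✓` reward. -/
def GConf.reward {S : Type u} {A : Type v} : GConf S A → Prop
  | .sp _ _ _ r => r = Rw.check
  | .dup _ _ _ r => r = Rw.check

/-- Moves of the `E`-generic bisimulation game. The parameter `rw1` is the reward
handed out by Duplicator's rule (1): `✓` in the gb game, `*` in the gbed game. -/
inductive GMove {S : Type u} {A : Type v} (L : LTS S A) (E : Set Face) (rw1 : Rw) :
    GConf S A → GConf S A → Prop
  | sp1 {s t c m r} (hc : c ≠ none) :
      GMove L E rw1 (GConf.sp (s, t) c m r) (GConf.dup (s, t) c m Rw.star)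
  | sp2a {s t m r a s'} (h : L.Trans s a s') :
      GMove L E rw1 (GConf.sp (s, t) none m r)
        (GConf.dup (s, t) (some (a, s')) (some (t, Face.frown)) Rw.star)
  | sp2b {s t c m r a s'} (h : L.Trans s a s') (hc : c ≠ some (a, s')) :
      GMove L E rw1 (GConf.sp (s, t) c m r)
        (GConf.dup (s, t) (some (a, s')) (some (t, Face.frown)) Rw.check)
  | sp3 {s t c m r a t'} (h : L.Trans t a t') :
      GMove L E rw1 (GConf.sp (s, t) c m r)
        (GConf.dup (t, s) (some (a, t')) (some (s, Face.frown)) Rw.check)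
  | dup1 {u v u' vb f r} :
      GMove L E rw1 (GConf.dup (u, v) (some (L.tau, u')) (some (vb, f)) r)
        (GConf.sp (u', vb) none none rw1)
  | dup2a {u v a u' vb v' r} (h : L.Trans vb a v') :
      GMove L E rw1 (GConf.dup (u, v) (some (a, u')) (some (vb, Face.frown)) r)
        (GConf.sp (u', v') (some (a, u')) (some (v', Face.smile)) Rw.star)
  | dup2b {u v a u' vb v' r} (h : L.Trans vb a v') :
      GMove L E rw1 (GConf.dup (u, v) (some (a, u')) (some (vb, Face.frown)) r)
        (GConf.sp (u', v') none none Rw.check)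
  | dup2c {u v a u' vb v' r} (h : L.Trans vb a v') (hE : Face.smile ∈ E) :
      GMove L E rw1 (GConf.dup (u, v) (some (a, u')) (some (vb, Face.frown)) r)
        (GConf.sp (u, v) (some (a, u')) (some (v', Face.smile)) Rw.star)
  | dup3a {u v a u' vb f v' r} (h : L.TauStep vb v') :
      GMove L E rw1 (GConf.dup (u, v) (some (a, u')) (some (vb, f)) r)
        (GConf.sp (u, v') (some (a, u')) (some (v', f)) Rw.star)
  | dup3b {u v a u' vb v' r} (h : L.TauStep vb v') :
      GMove L E rw1 (GConf.dup (u, v) (some (a, u')) (some (vb, Face.smile)) r)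
        (GConf.sp (u', v') none none Rw.check)
  | dup3c {u v a u' vb f v' r} (h : L.TauStep vb v') (hE : f ∈ E) :
      GMove L E rw1 (GConf.dup (u, v) (some (a, u')) (some (vb, f)) r)
        (GConf.sp (u, v) (some (a, u')) (some (v', f)) Rw.star)

/-- `E(x,y) ⊆ {☹,☺}`: the smallest set containing `☹` when `x = o` and `☺` when
`y = o`. -/
def Exy (x y : XY) : Set Face :=
  {f | (f = Face.frown ∧ x = XY.o) ∨ (f = Face.smile ∧ y = XY.o)}

/-- `s ≡_E t`: Duplicator wins the `E`-generic bisimulation game from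
`⟨(s,t),†,†,*⟩_S`; infinite plays are won by Duplicator iff they yield infinitely
many `✓` rewards. -/
def LTS.gbEquiv {S : Type u} {A : Type v} (L : LTS S A) (E : Set Face) (s t : S) : Prop :=
  DupWins GConf.dupOwned (GMove L E Rw.check) (BuchiWin GConf.reward)
    (GConf.sp (s, t) none none Rw.star)

/-- `s ≡ed_E t`: Duplicator wins the `E`-generic bisimulation with explicit
divergence game from `⟨(s,t),†,†,*⟩_S`. -/
def LTS.gbedEquiv {S : Type u} {A : Type v} (L : LTS S A) (E : Set Face) (s t : S) : Prop :=
  DupWins GConf.dupOwned (GMove L E Rw.star) (BuchiWin GConf.reward)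
    (GConf.sp (s, t) none none Rw.star)

/-- The abstraction function `f(⟨(s,t),c,m,r⟩) = ⟨(s,t),c,r⟩` from configurations
of the generic game to configurations of the bb game, preserving ownership. -/
def fabs {S : Type u} {A : Type v} : GConf S A → BConf S A
  | .sp p c _ r => .sp p c r
  | .dup p c _ r => .dup p c r


/-! ### Auxiliary development: semi-generic bisimulations (à la Basten) -/

namespace AuxSemi

variable {S : Type u} {A : Type v}

/-- The possible answers of Duplicator in the semi-generic bisimulation condition. -/
def SemiAnswer (L : LTS S A) (x y : XY) (R : S → S → Prop) (s t : S) (a : A) (s' : S) :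
    Prop :=
  (a = L.tau ∧ ∃ t', L.TauStar t t' ∧ R s t' ∧ R s' t') ∨
  ∃ t1 t2 t', L.GenTauStar x R s t t1 ∧ L.Trans t1 a t2 ∧
    L.GenTauStar y R s' t2 t' ∧ R s' t'

/-- Semi-generic bisimulations: the `a = τ` clause allows the responder to move. -/
def IsGenSemi (L : LTS S A) (x y : XY) (R : S → S → Prop) : Prop :=
  (∀ s t, R s t → R t s) ∧
  ∀ s t a s', R s t → L.Trans s a s' → SemiAnswer L x y R s t a s'

/-- Semi-generic bisimilarity. -/
def SB (L : LTS S A) (x y : XY) (s t : S) : Prop := ∃ R, IsGenSemi L x y R ∧ R s t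

theorem answer_mono {L : LTS S A} {x y : XY} {R R' : S → S → Prop}
    (h : ∀ a b, R a b → R' a b) {s t : S} {a : A} {s' : S} :
    SemiAnswer L x y R s t a s' → SemiAnswer L x y R' s t a s' := by
  rintro (⟨ha, t', h1, h2, h3⟩ | ⟨t1, t2, t', ⟨hp, hx⟩, htr, ⟨hq, hy⟩, hr⟩)
  · exact Or.inl ⟨ha, t', h1, h _ _ h2, h _ _ h3⟩
  · exact Or.inr ⟨t1, t2, t', ⟨hp, fun hb => ⟨h _ _ (hx hb).1, h _ _ (hx hb).2⟩⟩, htr,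
      ⟨hq, fun hb => ⟨h _ _ (hy hb).1, h _ _ (hy hb).2⟩⟩, h _ _ hr⟩

theorem gen_to_semi {L : LTS S A} {x y : XY} {R : S → S → Prop}
    (h : L.IsGenBisim x y R) : IsGenSemi L x y R := by
  refine ⟨h.1, fun s t a s' hst htr => ?_⟩
  rcases h.2 s t a s' hst htr with ⟨ha, h'⟩ | hm
  · exact Or.inl ⟨ha, t, Relation.ReflTransGen.refl, hst, h'⟩
  · exact Or.inr hm

theorem eq_genBisim (L : LTS S A) (x y : XY) : L.IsGenBisim x y Eq := by
  refine ⟨fun s t h => h.symm, fun s t a s' hst htr => ?_⟩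
  subst hst
  exact Or.inr ⟨s, s', s', ⟨Relation.ReflTransGen.refl, fun _ => ⟨rfl, rfl⟩⟩, htr,
    ⟨Relation.ReflTransGen.refl, fun _ => ⟨rfl, rfl⟩⟩, rfl⟩

theorem SB_semi (L : LTS S A) (x y : XY) : IsGenSemi L x y (SB L x y) := by
  constructor
  · rintro s t ⟨R, hR, hst⟩; exact ⟨R, hR, hR.1 _ _ hst⟩
  · rintro s t a s' ⟨R, hR, hst⟩ htr
    exact answer_mono (fun a b h => ⟨R, hR, h⟩) (hR.2 s t a s' hst htr)

theorem SB_refl (L : LTS S A) (x y : XY) (s : S) : SB L x y s s :=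
  ⟨Eq, gen_to_semi (eq_genBisim L x y), rfl⟩

theorem SB_symm {L : LTS S A} {x y : XY} {s t : S} (h : SB L x y s t) : SB L x y t s :=
  (SB_semi L x y).1 _ _ h

/-- Simulation of a τ-path through a semi-generic bisimulation. -/
theorem sim_path {L : LTS S A} {x y : XY} {R : S → S → Prop}
    (hR : IsGenSemi L x y R) {t u t' : S} (h2 : R t u)
    (h : Relation.ReflTransGen L.TauStep t t') :
    ∃ u', L.TauStar u u' ∧ R t' u' := by
  induction h with
  | refl => exact ⟨u, Relation.ReflTransGen.refl, h2⟩
  | tail hpath hstep ih =>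
    obtain ⟨u1, hu1, hR1⟩ := ih
    rcases hR.2 _ _ _ _ hR1 hstep with ⟨_, u', h1, _, h3⟩ |
      ⟨v1, v2, u', ⟨hp, _⟩, hv, ⟨hq, _⟩, hr⟩
    · exact ⟨u', Relation.ReflTransGen.trans hu1 h1, h3⟩
    · exact ⟨u', Relation.ReflTransGen.trans hu1
        (Relation.ReflTransGen.trans hp
          (Relation.ReflTransGen.trans (Relation.ReflTransGen.single hv) hq)), hr⟩

/-- The key composition step for semi-generic bisimulations. -/
theorem comp_forward {L : LTS S A} {x y : XY} {R1 R2 : S → S → Prop}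
    (h1 : IsGenSemi L x y R1) (h2 : IsGenSemi L x y R2) {s t u : S} {a : A} {s' : S}
    (hst : R1 s t) (htu : R2 t u) (htr : L.Trans s a s') :
    SemiAnswer L x y (fun p q => ∃ m, R1 p m ∧ R2 m q) s u a s' := by
  have hQsu : ∃ m, R1 s m ∧ R2 m u := ⟨t, hst, htu⟩
  rcases h1.2 s t a s' hst htr with ⟨ha, ts, hts, hsts, hs'ts⟩ |
    ⟨t1, t2, t', ⟨htt1, hx1⟩, ht12, ⟨ht2t', hy1⟩, hs't'⟩
  · obtain ⟨us, huus, hR2s⟩ := sim_path h2 htu hts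
    exact Or.inl ⟨ha, us, huus, ⟨ts, hsts, hR2s⟩, ⟨ts, hs'ts, hR2s⟩⟩
  · obtain ⟨uf, huuf, ht1uf⟩ := sim_path h2 htu htt1
    rcases h2.2 t1 uf a t2 ht1uf ht12 with ⟨ha, us, hufus, ht1us, ht2us⟩ |
      ⟨w1, w2, w3, ⟨hufw1, hx2⟩, hw12, ⟨hw2w3, hy2⟩, ht2w3⟩
    · -- Duplicator answered the challenge `t1 →a t2` without moving (`a = τ`).
      cases y with
      | o =>
        obtain ⟨u', husu', ht'u'⟩ := sim_path h2 ht2us ht2t'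
        have htot : L.TauStar u u' :=
          Relation.ReflTransGen.trans huuf (Relation.ReflTransGen.trans hufus husu')
        rcases Relation.ReflTransGen.cases_head htot with he | ⟨v2, hstep, hrest⟩
        · refine Or.inl ⟨ha, u, Relation.ReflTransGen.refl, hQsu, ?_⟩
          rw [he]; exact ⟨t', hs't', ht'u'⟩
        · exact Or.inr ⟨u, v2, u', ⟨Relation.ReflTransGen.refl, fun _ => ⟨hQsu, hQsu⟩⟩,
            by rw [ha]; exact hstep, ⟨hrest, fun h => nomatch h⟩, ⟨t', hs't', ht'u'⟩⟩
      | b =>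
        have hQ' : ∃ m, R1 s' m ∧ R2 m us := ⟨t2, (hy1 rfl).1, ht2us⟩
        cases x with
        | b =>
          exact Or.inl ⟨ha, us, Relation.ReflTransGen.trans huuf hufus,
            ⟨t1, (hx1 rfl).2, ht1us⟩, hQ'⟩
        | o =>
          rcases Relation.ReflTransGen.cases_tail
              (Relation.ReflTransGen.trans huuf hufus) with he | ⟨v1, hpre, hstep⟩
          · refine Or.inl ⟨ha, u, Relation.ReflTransGen.refl, hQsu, ?_⟩
            rw [← he]; exact hQ'
          · exact Or.inr ⟨v1, us, us, ⟨hpre, fun h => nomatch h⟩,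
              by rw [ha]; exact hstep,
              ⟨Relation.ReflTransGen.refl, fun _ => ⟨hQ', hQ'⟩⟩, hQ'⟩
    · -- Duplicator matched the challenge with a real `a`-move.
      obtain ⟨u', hw3u', ht'u'⟩ := sim_path h2 ht2w3 ht2t'
      exact Or.inr ⟨w1, w2, u', ⟨Relation.ReflTransGen.trans huuf hufw1,
          fun hb => ⟨hQsu, ⟨t1, (hx1 hb).2, (hx2 hb).2⟩⟩⟩, hw12,
        ⟨Relation.ReflTransGen.trans hw2w3 hw3u',
          fun hb => ⟨⟨t2, (hy1 hb).1, (hy2 hb).1⟩, ⟨t', hs't', ht'u'⟩⟩⟩,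
        ⟨t', hs't', ht'u'⟩⟩

/-- Symmetrised relational composition. -/
def Comp (R1 R2 : S → S → Prop) : S → S → Prop :=
  fun p q => (∃ m, R1 p m ∧ R2 m q) ∨ (∃ m, R2 p m ∧ R1 m q)

theorem comp_semi {L : LTS S A} {x y : XY} {R1 R2 : S → S → Prop}
    (h1 : IsGenSemi L x y R1) (h2 : IsGenSemi L x y R2) :
    IsGenSemi L x y (Comp R1 R2) := by
  constructor
  · rintro s t (⟨m, ha, hb⟩ | ⟨m, ha, hb⟩)
    · exact Or.inr ⟨m, h2.1 _ _ hb, h1.1 _ _ ha⟩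
    · exact Or.inl ⟨m, h1.1 _ _ hb, h2.1 _ _ ha⟩
  · rintro s t a s' (⟨m, ha, hb⟩ | ⟨m, ha, hb⟩) htr
    · exact answer_mono (fun p q h => Or.inl h) (comp_forward h1 h2 ha hb htr)
    · exact answer_mono (fun p q h => Or.inr h) (comp_forward h2 h1 ha hb htr)

theorem SB_trans {L : LTS S A} {x y : XY} {s t u : S}
    (h1 : SB L x y s t) (h2 : SB L x y t u) : SB L x y s u := by
  obtain ⟨R1, hR1, hst⟩ := h1
  obtain ⟨R2, hR2, htu⟩ := h2
  exact ⟨Comp R1 R2, comp_semi hR1 hR2, Or.inl ⟨t, hst, htu⟩⟩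

/-- The stuttering extension of semi-generic bisimilarity. -/
def StR (L : LTS S A) (x y : XY) : S → S → Prop :=
  fun p q => SB L x y p q ∨
    (∃ e, SB L x y p e ∧ L.TauStar p q ∧ L.TauStar q e) ∨
    (∃ e, SB L x y q e ∧ L.TauStar q p ∧ L.TauStar p e)

theorem StR_semi (L : LTS S A) (x y : XY) : IsGenSemi L x y (StR L x y) := by
  constructor
  · rintro s t (h | ⟨e, h1, h2, h3⟩ | ⟨e, h1, h2, h3⟩)
    · exact Or.inl ((SB_semi L x y).1 _ _ h)
    · exact Or.inr (Or.inr ⟨e, h1, h2, h3⟩)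
    · exact Or.inr (Or.inl ⟨e, h1, h2, h3⟩)
  · rintro s t a s' (h | ⟨e, h1, h2, h3⟩ | ⟨e, h1, h2, h3⟩) htr
    · exact answer_mono (fun p q h => Or.inl h) ((SB_semi L x y).2 s t a s' h htr)
    · rcases (SB_semi L x y).2 s e a s' h1 htr with ⟨ha, e', he', hse', hs'e'⟩ |
        ⟨t1, t2, t', ⟨hp, hx⟩, htr', ⟨hq, hy⟩, hr⟩
      · exact Or.inl ⟨ha, e', Relation.ReflTransGen.trans h3 he', Or.inl hse',
          Or.inl hs'e'⟩
      · exact Or.inr ⟨t1, t2, t', ⟨Relation.ReflTransGen.trans h3 hp,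
          fun hb => ⟨Or.inr (Or.inl ⟨e, h1, h2, h3⟩), Or.inl (hx hb).2⟩⟩, htr',
          ⟨hq, fun hb => ⟨Or.inl (hy hb).1, Or.inl (hy hb).2⟩⟩, Or.inl hr⟩
    · exact Or.inr ⟨s, s', s', ⟨h2, fun _ => ⟨Or.inr (Or.inr ⟨e, h1, h2, h3⟩),
        Or.inl (SB_refl L x y s)⟩⟩, htr, ⟨Relation.ReflTransGen.refl,
        fun _ => ⟨Or.inl (SB_refl L x y s'), Or.inl (SB_refl L x y s')⟩⟩,
        Or.inl (SB_refl L x y s')⟩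

/-- Stuttering lemma for semi-generic bisimilarity. -/
theorem stutter {L : LTS S A} {x y : XY} {t w t' : S} (h1 : L.TauStar t w)
    (h2 : L.TauStar w t') (h : SB L x y t t') : SB L x y t w :=
  ⟨StR L x y, StR_semi L x y, Or.inr (Or.inl ⟨t', h, h1, h2⟩)⟩

/-- Semi-generic bisimilarity is a generic bisimulation (Basten's key lemma). -/
theorem SB_gen (L : LTS S A) (x y : XY) : L.IsGenBisim x y (SB L x y) := by
  refine ⟨(SB_semi L x y).1, fun s t a s' hst htr => ?_⟩
  rcases (SB_semi L x y).2 s t a s' hst htr with ⟨ha, t', hpath, h2, h3⟩ | hm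
  · rcases Relation.ReflTransGen.cases_tail hpath with he | ⟨w, hpre, hstep⟩
    · exact Or.inl ⟨ha, he ▸ h3⟩
    · have htt' : SB L x y t t' := SB_trans (SB_symm hst) h2
      have htw : SB L x y t w :=
        stutter hpre (Relation.ReflTransGen.single hstep) htt'
      have hsw : SB L x y s w := SB_trans hst htw
      exact Or.inr ⟨w, t', t', ⟨hpre, fun _ => ⟨hst, hsw⟩⟩,
        by rw [ha]; exact hstep,
        ⟨Relation.ReflTransGen.refl, fun _ => ⟨h3, h3⟩⟩, h3⟩
  · exact Or.inr hm

end AuxSemi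

/-- For all `x, y ∈ {o,b}`, `(x,y)`-generic bisimilarity is an
equivalence relation on the states of any labelled transition system. -/
theorem genBisimilar_equivalence {S : Type u} {A : Type v} (L : LTS S A)
    (x y : XY) :
    Equivalence (L.GenBisimilar x y) := by
  constructor
  · intro s
    exact ⟨Eq, AuxSemi.eq_genBisim L x y, rfl⟩
  · rintro s t ⟨R, hR, hst⟩
    exact ⟨R, hR, hR.1 _ _ hst⟩
  · rintro s t u ⟨R1, hR1, hst⟩ ⟨R2, hR2, htu⟩
    exact ⟨AuxSemi.SB L x y, AuxSemi.SB_gen L x y,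
      AuxSemi.SB_trans ⟨R1, AuxSemi.gen_to_semi hR1, hst⟩
        ⟨R2, AuxSemi.gen_to_semi hR2, htu⟩⟩

end GamesBisim
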